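/- arXiv:1703.06874 — 6 statements merged into one kernel-verified Lean document; each statement's English description precedes it below -/
import Mathlib

section
/- Let p, q > 1 be coprime positive integers and let p*, q* be integers with p*p - q*q = 1 and 0 ≤ q* < p. Then for every positive integer k, (1/k)·(1 + ⌊(q*/p)·k⌋ + ⌊k/(p+q)⌋) ≥ p*/q. -/
/-!
Write `q* k = p A + r` with `0 ≤ r < p`. Since `p* p - q* q = 1`, the integer `N = p* k - q A`
satisfies `p N = k + q r`. Bounding `r ≤ p - 1` and `k < (p + q)(B + 1)` with `B = ⌊k / (p + q)⌋`,
and using `p + q ≤ p q`, gives `p N < p (q (1 + B) + 1)`, i.e. `p* k ≤ q (1 + A + B)`.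
-/

theorem Rat.floor_intCast_div_intCast_of_pos (a : ℤ) {b : ℤ} (hb : 0 < b) :
    ⌊(a : ℚ) / b⌋ = a / b := by
  lift b to ℕ using hb.le
  exact_mod_cast Rat.floor_intCast_div_natCast a b

theorem Int.mul_le_one_add_ediv_add_ediv_mul {p q ps qs k : ℤ} (hp : 1 < p) (hq : 1 < q)
    (h1 : ps * p - qs * q = 1) (hk : 0 ≤ k) :
    ps * k ≤ (1 + qs * k / p + k / (p + q)) * q := by
  set A := qs * k / p
  set B := k / (p + q)
  set r := qs * k % p
  have hpN : p * (ps * k - q * A) = k + q * r := by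
    linear_combination k * h1 - q * Int.mul_ediv_add_emod (qs * k) p
  have hr : r ≤ p - 1 := by have := Int.emod_lt_of_pos (qs * k) (by omega : 0 < p); omega
  have hkB : k < (p + q) * B + (p + q) := Int.lt_mul_ediv_self_add (by omega)
  have hB : 0 ≤ B := Int.ediv_nonneg hk (by omega)
  have hpq : p + q ≤ p * q := by nlinarith
  have hqr : q * r ≤ q * (p - 1) := mul_le_mul_of_nonneg_left hr (by omega)
  have hpqB : (p + q) * B ≤ p * q * B := mul_le_mul_of_nonneg_right hpq hB
  have hlt : p * (ps * k - q * A) < p * (q * (1 + B) + 1) := by rw [hpN]; linarith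
  have := lt_of_mul_lt_mul_left hlt (by omega : 0 ≤ p)
  linarith

theorem stmt1_general (p q ps qs : ℤ) (hp : 1 < p) (hq : 1 < q)
    (h1 : ps * p - qs * q = 1) :
    ∀ k : ℤ, 0 < k →
      (1 / (k : ℚ)) * ((1 : ℚ) + (⌊((qs : ℚ) / p) * k⌋ : ℤ) + (⌊(k : ℚ) / ((p : ℚ) + q)⌋ : ℤ))
        ≥ (ps : ℚ) / q := by
  intro k hk
  have hA : ⌊((qs : ℚ) / p) * k⌋ = qs * k / p := by
    rw [← Rat.floor_intCast_div_intCast_of_pos _ (by omega : 0 < p)]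
    push_cast
    ring_nf
  have hB : ⌊(k : ℚ) / ((p : ℚ) + q)⌋ = k / (p + q) := by
    rw [← Rat.floor_intCast_div_intCast_of_pos _ (by omega : 0 < p + q)]
    push_cast
    rfl
  have hk' : (0 : ℚ) < k := mod_cast hk
  have hq' : (0 : ℚ) < q := mod_cast (by omega : 0 < q)
  rw [hA, hB, ge_iff_le, div_le_iff₀ hq', one_div_mul_eq_div, div_mul_eq_mul_div, le_div_iff₀ hk']
  exact_mod_cast Int.mul_le_one_add_ediv_add_ediv_mul hp hq h1 hk.le

/-- For coprime `p, q > 1` with `p*p - q*q = 1`, `0 ≤ q* < p`, and every positive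
integer `k`, `(1/k)·(1 + ⌊(q*/p)·k⌋ + ⌊k/(p+q)⌋) ≥ p*/q`. -/
theorem stmt1 (p q ps qs : ℤ) (hp : 1 < p) (hq : 1 < q) (hco : IsCoprime p q)
    (h1 : ps * p - qs * q = 1) (h2 : 0 ≤ qs) (h3 : qs < p) :
    ∀ k : ℤ, 0 < k →
      (1 / (k : ℚ)) * ((1 : ℚ) + (⌊((qs : ℚ) / p) * k⌋ : ℤ) + (⌊(k : ℚ) / ((p : ℚ) + q)⌋ : ℤ))
        ≥ (ps : ℚ) / q :=
  stmt1_general p q ps qs hp hq h1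
end

section
/- Let p, q > 1 be coprime integers and let k be an integer with 0 < k < p+q such that p does not divide k and q does not divide k. If p⁻¹ and q⁻¹ denote multiplicative inverses of p mod q and q mod p respectively, then q·[k·q⁻¹]_p + p·[k·p⁻¹]_q = k + pq, where [a]_m denotes the least nonnegative residue of a modulo m. -/
/-!
Write `S = q·[k·q⁻¹]_p + p·[k·p⁻¹]_q`. Modulo `p` the second term vanishes and the first is
`≡ q·q⁻¹·k ≡ k`; symmetrically modulo `q`, so `S ≡ k [ZMOD pq]`. As `p ∤ k` and `q ∤ k`, both
residues are nonzero, whence `p + q ≤ S ≤ 2pq - p - q`; with `0 < k < p + q` this leaves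
`S - k = pq` as the only multiple of `pq` in range.
-/

namespace Int

variable {p q r : ℤ}

theorem mul_mul_emod_modEq_of_mul_modEq_one (h : q * r ≡ 1 [ZMOD p]) (k : ℤ) :
    q * (k * r % p) ≡ k [ZMOD p] :=
  calc q * (k * r % p) ≡ q * (k * r) [ZMOD p] := (mod_modEq _ _).mul_left q
    _ = k * (q * r) := by ring
    _ ≡ k * 1 [ZMOD p] := h.mul_left k
    _ = k := mul_one k

theorem mul_emod_pos_of_mul_modEq_one (hp : 0 < p) (h : q * r ≡ 1 [ZMOD p]) {k : ℤ}
    (hk : ¬ p ∣ k) : 0 < k * r % p := by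
  refine lt_of_le_of_ne (emod_nonneg _ hp.ne') fun h0 => hk ?_
  have := mul_mul_emod_modEq_of_mul_modEq_one h k
  rw [← h0, mul_zero] at this
  exact modEq_zero_iff_dvd.mp this.symm

theorem mul_emod_add_mul_emod_modEq (hpq : IsCoprime p q) {pinv qinv : ℤ}
    (hqinv : q * qinv ≡ 1 [ZMOD p]) (hpinv : p * pinv ≡ 1 [ZMOD q]) (k : ℤ) :
    q * (k * qinv % p) + p * (k * pinv % q) ≡ k [ZMOD p * q] := by
  refine (modEq_and_modEq_iff_modEq_mul (isCoprime_iff_gcd_eq_one.mp hpq)).mp ⟨?_, ?_⟩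
  · simpa using (mul_mul_emod_modEq_of_mul_modEq_one hqinv k).add
      (modEq_zero_iff_dvd.mpr (dvd_mul_right p (k * pinv % q)))
  · simpa using (modEq_zero_iff_dvd.mpr (dvd_mul_right q (k * qinv % p))).add
      (mul_mul_emod_modEq_of_mul_modEq_one hpinv k)

theorem eq_add_of_modEq_of_lt_of_lt {x y m : ℤ} (h : x ≡ y [ZMOD m]) (hlt : y < x)
    (hlt' : x < y + 2 * m) : x = y + m := by
  obtain ⟨c, hc⟩ := modEq_iff_dvd.mp h.symm
  have hm : 0 < m := by omega
  have hc1 : 0 < c := pos_of_mul_pos_right (hc ▸ sub_pos.mpr hlt) hm.le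
  have hc2 : c < 2 := lt_of_mul_lt_mul_left (by linarith) hm.le
  obtain rfl : c = 1 := by omega
  linarith

end Int

/-- For coprime `p, q > 1`, `0 < k < p + q` with `p ∤ k`, `q ∤ k`, and `qinv`, `pinv`
inverses of `q` mod `p` and of `p` mod `q`, one has
`q·[k·q⁻¹]_p + p·[k·p⁻¹]_q = k + pq`. -/
theorem stmt2 (p q k pinv qinv : ℤ) (hp : 1 < p) (hq : 1 < q) (hco : IsCoprime p q)
    (hk0 : 0 < k) (hk : k < p + q) (hpk : ¬ p ∣ k) (hqk : ¬ q ∣ k)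
    (hqinv : q * qinv ≡ 1 [ZMOD p]) (hpinv : p * pinv ≡ 1 [ZMOD q]) :
    q * ((k * qinv) % p) + p * ((k * pinv) % q) = k + p * q := by
  have ha_pos := Int.mul_emod_pos_of_mul_modEq_one (by omega) hqinv hpk
  have hb_pos := Int.mul_emod_pos_of_mul_modEq_one (by omega) hpinv hqk
  have ha_lt := Int.emod_lt_of_pos (k * qinv) (by omega : 0 < p)
  have hb_lt := Int.emod_lt_of_pos (k * pinv) (by omega : 0 < q)
  apply Int.eq_add_of_modEq_of_lt_of_lt (Int.mul_emod_add_mul_emod_modEq hco hqinv hpinv k)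
  · nlinarith
  · nlinarith
end

section
/- Let p, q be coprime positive integers with inverses q⁻¹ of q mod p and p⁻¹ of p mod q. Then for every integer k, q·[q⁻¹·k]_p + p·[p⁻¹·k]_q ≡ k (mod pq), and if additionally p ∤ k and q ∤ k, then q·[q⁻¹·k]_p + p·[p⁻¹·k]_q equals either k + pq or k + 2pq minus appropriate multiples; in particular when 0 < k < p+q with p ∤ k, q ∤ k one has q·[q⁻¹·k]_p + p·[p⁻¹·k]_q = pq + k. -/
/-!
Modulo `p` the second summand vanishes and the first is `q q⁻¹ k ≡ k`; symmetrically
modulo `q`, so the congruence modulo `pq` is the Chinese remainder theorem. When `p ∤ k`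
and `q ∤ k` both residues are nonzero, which puts the sum in `[p + q, 2pq - p - q]`; for
`0 < k < p + q` the only value in that range congruent to `k` modulo `pq` is `pq + k`.
-/

namespace Int

theorem mul_add_mul_modEq_left {p q qinv a b k : ℤ} (hqinv : q * qinv ≡ 1 [ZMOD p])
    (ha : a ≡ qinv * k [ZMOD p]) : q * a + p * b ≡ k [ZMOD p] :=
  calc q * a + p * b ≡ q * (qinv * k) + 0 [ZMOD p] :=
        (ha.mul_left q).add (modEq_zero_iff_dvd.mpr (dvd_mul_right p b))
    _ = q * qinv * k := by ring
    _ ≡ 1 * k [ZMOD p] := hqinv.mul_right k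
    _ = k := one_mul k

theorem mul_add_mul_modEq_mul {p q pinv qinv a b k : ℤ} (hco : IsCoprime p q)
    (hqinv : q * qinv ≡ 1 [ZMOD p]) (hpinv : p * pinv ≡ 1 [ZMOD q])
    (ha : a ≡ qinv * k [ZMOD p]) (hb : b ≡ pinv * k [ZMOD q]) :
    q * a + p * b ≡ k [ZMOD p * q] := by
  have hp := mul_add_mul_modEq_left (b := b) hqinv ha
  have hq := mul_add_mul_modEq_left (b := a) hpinv hb
  rw [add_comm] at hq
  rw [modEq_comm, modEq_iff_dvd] at hp hq ⊢
  exact hco.mul_dvd hp hq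

theorem mul_emod_ne_zero_of_not_dvd {p q qinv k : ℤ} (hqinv : q * qinv ≡ 1 [ZMOD p])
    (hk : ¬ p ∣ k) : qinv * k % p ≠ 0 := by
  intro h
  apply hk
  rw [← modEq_zero_iff_dvd]
  calc k = 1 * k := (one_mul k).symm
    _ ≡ q * qinv * k [ZMOD p] := (hqinv.mul_right k).symm
    _ = q * (qinv * k % p) + q * p * (qinv * k / p) := by rw [emod_def]; ring
    _ = 0 + p * (q * (qinv * k / p)) := by rw [h]; ring
    _ ≡ 0 [ZMOD p] := modEq_add_fac_self

theorem mul_add_mul_eq_of_modEq {p q a b k : ℤ} (ha₀ : 0 < a) (ha : a < p) (hb₀ : 0 < b)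
    (hb : b < q) (hk₀ : 0 < k) (hk : k < p + q) (h : q * a + p * b ≡ k [ZMOD p * q]) :
    q * a + p * b = p * q + k := by
  have hdvd : p * q ∣ q * a + p * b - (p * q + k) := by
    rw [← modEq_iff_dvd]
    exact add_modEq_left.trans h.symm
  suffices |q * a + p * b - (p * q + k)| < p * q by
    linarith [eq_zero_of_abs_lt_dvd hdvd this]
  have hqa : q ≤ q * a ∧ q * a ≤ q * (p - 1) := ⟨by nlinarith, by nlinarith⟩
  have hpb : p ≤ p * b ∧ p * b ≤ p * (q - 1) := ⟨by nlinarith, by nlinarith⟩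
  rw [abs_lt]
  constructor <;> nlinarith

end Int

/-- For coprime positive `p, q` with inverses `qinv` of `q` mod `p` and `pinv` of `p`
mod `q`: for every integer `k`, `q·[q⁻¹k]_p + p·[p⁻¹k]_q ≡ k (mod pq)`; and if
`0 < k < p + q` with `p ∤ k` and `q ∤ k`, then `q·[q⁻¹k]_p + p·[p⁻¹k]_q = pq + k`. -/
theorem stmt3 (p q pinv qinv : ℤ) (hp : 0 < p) (hq : 0 < q) (hco : IsCoprime p q)
    (hqinv : q * qinv ≡ 1 [ZMOD p]) (hpinv : p * pinv ≡ 1 [ZMOD q]) :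
    (∀ k : ℤ, q * ((qinv * k) % p) + p * ((pinv * k) % q) ≡ k [ZMOD p * q]) ∧
    (∀ k : ℤ, 0 < k → k < p + q → ¬ p ∣ k → ¬ q ∣ k →
      q * ((qinv * k) % p) + p * ((pinv * k) % q) = p * q + k) := by
  have hcongr (k : ℤ) : q * ((qinv * k) % p) + p * ((pinv * k) % q) ≡ k [ZMOD p * q] :=
    Int.mul_add_mul_modEq_mul hco hqinv hpinv (Int.mod_modEq _ _) (Int.mod_modEq _ _)
  refine ⟨hcongr, fun k hk₀ hk hpk hqk ↦ Int.mul_add_mul_eq_of_modEq ?_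
    (Int.emod_lt_of_pos _ hp) ?_ (Int.emod_lt_of_pos _ hq) hk₀ hk (hcongr k)⟩
  · exact (Int.emod_nonneg _ hp.ne').lt_of_ne (Int.mul_emod_ne_zero_of_not_dvd hqinv hpk).symm
  · exact (Int.emod_nonneg _ hq.ne').lt_of_ne (Int.mul_emod_ne_zero_of_not_dvd hpinv hqk).symm
end

section
/- With ψ and Λ as above, the finite-coordinate part of the orbit of the point (∞, …, ∞) under the ψ-conjugated Λ-action is contained in the set ([pq-1, pq) ∪ (pq, pq+1])ⁿ; that is, every element of Λ·{(∞,…,∞)} lying in ℚⁿ has each coordinate in [pq-1, pq) ∪ (pq, pq+1]. -/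
/-!
The orbit of `(∞, …, ∞)` is explicit: `ψ⁻¹(∞) = 0`, so `l · (∞, …, ∞) = (pq + 1/l₁, …, pq + 1/lₙ)`,
where a coordinate is finite exactly when `lᵢ ≠ 0`. Each finite coordinate therefore differs
from `pq` by the reciprocal of a nonzero integer, which lies in `[-1, 0) ∪ (0, 1]`.
-/

/-- `y ↦ c + 1/y` on `ℚ ∪ {∞}` (`none = ∞`), with `1/∞ = 0`, `1/0 = ∞`. -/
def psi1 (c : ℚ) : Option ℚ → Option ℚ
  | none => some c
  | some x => if x = 0 then none else some (c + x⁻¹)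

/-- The inverse map `α ↦ 1/(α - c)`, with `∞ ↦ 0` and `c ↦ ∞`. -/
def psiInv1 (c : ℚ) : Option ℚ → Option ℚ
  | none => some 0
  | some a => if a = c then none else some (a - c)⁻¹

/-- Addition of an integer on `ℚ ∪ {∞}`, with `l + ∞ = ∞`. -/
def addZ (l : ℤ) : Option ℚ → Option ℚ := Option.map (fun t => (l : ℚ) + t)

lemma Int.inv_cast_mem_Ico_or_Ioc {K : Type*} [Field K] [LinearOrder K] [IsStrictOrderedRing K]
    {m : ℤ} (hm : m ≠ 0) :
    (m : K)⁻¹ ∈ Set.Ico (-1) 0 ∪ Set.Ioc 0 1 := by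
  rcases hm.lt_or_gt with hneg | hpos
  · have hle : (1 : K) ≤ -(m : K) := by exact_mod_cast Int.neg_pos_of_neg hneg
    have hinv : (-(m : K))⁻¹ ≤ 1 := inv_le_one_of_one_le₀ hle
    rw [inv_neg] at hinv
    exact Or.inl ⟨by linarith, inv_lt_zero.mpr (by exact_mod_cast hneg)⟩
  · have hle : (1 : K) ≤ m := by exact_mod_cast hpos
    exact Or.inr ⟨inv_pos.mpr (by exact_mod_cast hpos), inv_le_one_of_one_le₀ hle⟩

lemma eq_add_inv_of_psi1_addZ_psiInv1_none {c x : ℚ} {m : ℤ}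
    (h : psi1 c (addZ m (psiInv1 c none)) = some x) : m ≠ 0 ∧ x = c + (m : ℚ)⁻¹ := by
  simp only [psiInv1, addZ, Option.map_some, add_zero, psi1, Int.cast_eq_zero] at h
  split_ifs at h with hm
  exact ⟨hm, (Option.some_injective _ h).symm⟩

theorem stmt8_general (n : ℕ) (p q : ℤ) (l : Fin n → ℤ)
    (a : Fin n → ℚ)
    (ha : ∀ i, psi1 ((p * q : ℤ) : ℚ)
        (addZ (l i) (psiInv1 ((p * q : ℤ) : ℚ) none)) = some (a i)) :
    ∀ i, (((p * q : ℤ) : ℚ) - 1 ≤ a i ∧ a i < ((p * q : ℤ) : ℚ)) ∨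
      (((p * q : ℤ) : ℚ) < a i ∧ a i ≤ ((p * q : ℤ) : ℚ) + 1) := by
  intro i
  obtain ⟨hl, hai⟩ := eq_add_inv_of_psi1_addZ_psiInv1_none (ha i)
  rw [hai]
  rcases Int.inv_cast_mem_Ico_or_Ioc (K := ℚ) hl with ⟨hlo, hhi⟩ | ⟨hlo, hhi⟩
  · exact Or.inl ⟨by linarith, by linarith⟩
  · exact Or.inr ⟨by linarith, by linarith⟩

/-- Every element of the orbit `Λ·{(∞,…,∞)}` (under `l · α := ψ(l + ψ⁻¹(α))`)
lying in `ℚⁿ` has each coordinate in `[pq-1, pq) ∪ (pq, pq+1]`. -/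
theorem stmt8 (n : ℕ) (p q : ℤ) (l : Fin n → ℤ) (hl : ∑ i, l i = 0)
    (a : Fin n → ℚ)
    (ha : ∀ i, psi1 ((p * q : ℤ) : ℚ)
        (addZ (l i) (psiInv1 ((p * q : ℤ) : ℚ) none)) = some (a i)) :
    ∀ i, (((p * q : ℤ) : ℚ) - 1 ≤ a i ∧ a i < ((p * q : ℤ) : ℚ)) ∨
      (((p * q : ℤ) : ℚ) < a i ∧ a i ≤ ((p * q : ℤ) : ℚ) + 1) :=
  stmt8_general n p q l a ha
end

section
/- Let N > q be integers and let y ∈ ℚ with fractional part [−y] ≥ (N−q−1)/(N−q). Then for every positive integer k, writing s = ⌈k/(N−q)⌉ and k = s(N−q) − t with 0 ≤ t < N−q, one has (1/k)·(⌈k/(N−q)⌉ + ⌊[−y]·k⌋) ≥ 1, with equality attained at k = 1 when [−y] ≥ (N−q−1)/(N−q); hence inf over k > 0 of (1/k)·(⌈k/(N−q)⌉ + ⌊[−y]·k⌋) = 1. -/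
/-!
With `d = N - q` and `f = [-y]` the hypothesis reads `f ≥ 1 - 1/d`, so monotonicity of the floor gives
`⌊f k⌋ ≥ ⌊k - k/d⌋ = k - ⌈k/d⌉`, i.e. `⌈k/d⌉ + ⌊f k⌋ ≥ k` for every `k ≥ 0`.
At `k = 1` with `d ≥ 1` both terms are explicit: `⌈1/d⌉ = 1` and `⌊f⌋ = 0` for a fractional part `f`.
-/

section

variable {α : Type*} [Field α] [LinearOrder α] [IsStrictOrderedRing α] [FloorRing α]

theorem Int.le_ceil_div_add_floor_mul {d f : α} (hd : d ≠ 0) (hf : (d - 1) / d ≤ f)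
    {k : ℤ} (hk : 0 ≤ k) : k ≤ ⌈(k : α) / d⌉ + ⌊f * k⌋ := by
  have hsplit : (d - 1) / d * (k : α) = k + -(k / d) := by
    field_simp
    ring
  have hmono : ⌊(d - 1) / d * (k : α)⌋ ≤ ⌊f * k⌋ :=
    Int.floor_mono (mul_le_mul_of_nonneg_right hf (by exact_mod_cast hk))
  rw [hsplit, Int.floor_intCast_add, Int.floor_neg] at hmono
  omega

theorem Int.ceil_one_div_of_one_le {d : α} (hd : 1 ≤ d) : ⌈1 / d⌉ = 1 := by
  rw [Int.ceil_eq_iff]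
  constructor
  · norm_num
    positivity
  · simpa using inv_le_one_of_one_le₀ hd

end

/-- Let `N > q` be integers and `y ∈ ℚ` with `[−y] ≥ (N−q−1)/(N−q)`.  Then for all
integers `k > 0`, `(1/k)·(⌈k/(N−q)⌉ + ⌊[−y]·k⌋) ≥ 1`, with equality at `k = 1`;
hence the infimum over `k > 0` of this quantity is `1`. -/
theorem stmt13 (N q : ℤ) (hNq : q < N) (y : ℚ)
    (hy : ((N : ℚ) - q - 1) / ((N : ℚ) - q) ≤ Int.fract (-y)) :
    (∀ k : ℤ, 0 < k →
      (1 : ℚ) ≤ (1 / (k : ℚ)) * ((⌈(k : ℚ) / ((N : ℚ) - q)⌉ + ⌊Int.fract (-y) * k⌋ : ℤ) : ℚ)) ∧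
    ((1 / ((1 : ℤ) : ℚ)) *
        ((⌈((1 : ℤ) : ℚ) / ((N : ℚ) - q)⌉ + ⌊Int.fract (-y) * ((1 : ℤ) : ℚ)⌋ : ℤ) : ℚ) = 1) ∧
    IsLeast {x : ℚ | ∃ k : ℤ, 0 < k ∧
      x = (1 / (k : ℚ)) * ((⌈(k : ℚ) / ((N : ℚ) - q)⌉ + ⌊Int.fract (-y) * k⌋ : ℤ) : ℚ)} 1 := by
  have hd : (1 : ℚ) ≤ (N : ℚ) - q := by
    have : (q : ℚ) + 1 ≤ N := by exact_mod_cast hNq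
    linarith
  have hbound : ∀ k : ℤ, 0 < k →
      (1 : ℚ) ≤ (1 / (k : ℚ)) * ((⌈(k : ℚ) / ((N : ℚ) - q)⌉ + ⌊Int.fract (-y) * k⌋ : ℤ) : ℚ) := by
    intro k hk
    have hk' : (0 : ℚ) < k := Int.cast_pos.mpr hk
    rw [one_div_mul_eq_div, le_div_iff₀ hk', one_mul]
    exact_mod_cast Int.le_ceil_div_add_floor_mul (by positivity) hy hk.le
  have hone : (1 / ((1 : ℤ) : ℚ)) *
      ((⌈((1 : ℤ) : ℚ) / ((N : ℚ) - q)⌉ + ⌊Int.fract (-y) * ((1 : ℤ) : ℚ)⌋ : ℤ) : ℚ) = 1 := by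
    simp only [Int.cast_one, mul_one, Int.ceil_one_div_of_one_le hd, Int.floor_fract]
    norm_num
  exact ⟨hbound, hone, ⟨1, one_pos, hone.symm⟩, fun x ⟨k, hk, hx⟩ => hx ▸ hbound k hk⟩
end

section
/- Let p > 1 and q > 1 be coprime with p* p − q* q = 1, 0 ≤ q* < p, let m ∈ ℤ with m < q/p, and suppose for all positive integers k that S(k) ≥ ⌊k/(q − mp)⌋ where S(k) ≥ 0. Then for all positive integers k, (1/k)·(1 + ⌊(q*/p)k⌋ + ⌊k/(q − mp)⌋) > (p* − m q*)/(q − m p). -/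
/-!
Put `d = q - m p > 0` and `a = p* - m q*`, so that `a p - q* d = 1`. Writing
`q* k = p ⌊q* k / p⌋ + r` and `k = d ⌊k / d⌋ + s`, multiplying the claim by `p d` leaves
`d (p - r) + (p - 1) d ⌊k / d⌋ - s > 0`, which holds because `r < p` and `s < d`.
-/

theorem Int.mul_lt_one_add_ediv_add_ediv_mul {a b p d k : ℤ} (hp : 0 < p) (hd : 0 < d)
    (hk : 0 ≤ k) (h : a * p - b * d = 1) : a * k < (1 + b * k / p + k / d) * d := by
  have hr := Int.emod_lt_of_pos (b * k) hp
  have hs := Int.emod_lt_of_pos k hd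
  have hB : 0 ≤ d * (k / d) := mul_nonneg hd.le (Int.ediv_nonneg hk hd.le)
  have expand : p * ((1 + b * k / p + k / d) * d) - p * (a * k)
      = d * (p - b * k % p) + (p - 1) * (d * (k / d)) - k % d := by
    linear_combination d * Int.mul_ediv_add_emod (b * k) p + Int.mul_ediv_add_emod k d - k * h
  have : p * (a * k) < p * ((1 + b * k / p + k / d) * d) := by
    nlinarith [mul_le_mul_of_nonneg_left (show 1 ≤ p - b * k % p by omega) hd.le,
      mul_nonneg (show 0 ≤ p - 1 by omega) hB]
  exact lt_of_mul_lt_mul_left this hp.le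

theorem Int.floor_intCast_div_intCast {n d : ℤ} (hd : 0 ≤ d) : ⌊(n : ℚ) / d⌋ = n / d := by
  rw [Int.floor_div_cast_of_nonneg hd, Int.floor_intCast]

theorem Rat.div_lt_one_add_floor_add_floor_div {a b p d k : ℤ} (hp : 0 < p) (hd : 0 < d)
    (hk : 0 < k) (h : a * p - b * d = 1) :
    (a : ℚ) / d < 1 / (k : ℚ) * ((1 + ⌊(b : ℚ) / p * k⌋ + ⌊(k : ℚ) / d⌋ : ℤ) : ℚ) := by
  have hfloor : ⌊(b : ℚ) / p * k⌋ = b * k / p := by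
    rw [div_mul_eq_mul_div, ← Int.cast_mul, Int.floor_intCast_div_intCast hp.le]
  rw [hfloor, Int.floor_intCast_div_intCast hd.le, one_div, inv_mul_eq_div,
    div_lt_div_iff₀ (by exact_mod_cast hd) (by exact_mod_cast hk)]
  exact_mod_cast Int.mul_lt_one_add_ediv_add_ediv_mul hp hd hk.le h

theorem stmt17_general (p q ps qs m : ℤ) (hp : 1 < p)
    (h1 : ps * p - qs * q = 1)
    (hm : (m : ℚ) < (q : ℚ) / p) :
    ∀ k : ℤ, 0 < k →
      (1 / (k : ℚ)) *
          ((1 + ⌊((qs : ℚ) / p) * k⌋ + ⌊(k : ℚ) / ((q : ℚ) - m * p)⌋ : ℤ) : ℚ)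
        > ((ps : ℚ) - m * qs) / ((q : ℚ) - m * p) := by
  intro k hk
  have hp0 : 0 < p := by omega
  have hd : 0 < q - m * p := by
    have : (m : ℚ) * p < q := (lt_div_iff₀ (by exact_mod_cast hp0)).mp hm
    exact_mod_cast sub_pos.mpr this
  rw [gt_iff_lt, show (q : ℚ) - m * p = ((q - m * p : ℤ) : ℚ) by push_cast; ring,
    show (ps : ℚ) - m * qs = ((ps - m * qs : ℤ) : ℚ) by push_cast; ring]
  exact Rat.div_lt_one_add_floor_add_floor_div hp0 hd hk (by linear_combination h1)

/-- For coprime `p, q > 1` with `p*p − q*q = 1`, `0 ≤ q* < p`, an integer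
`m < q/p`, and `S : ℤ → ℤ` with `S(k) ≥ ⌊k/(q − mp)⌋` and `S(k) ≥ 0` for all
`k > 0`: for all positive integers `k`,
`(1/k)·(1 + ⌊(q*/p)k⌋ + ⌊k/(q − mp)⌋) > (p* − m q*)/(q − m p)`. -/
theorem stmt17 (p q ps qs m : ℤ) (hp : 1 < p) (hq : 1 < q) (hco : IsCoprime p q)
    (h1 : ps * p - qs * q = 1) (h2 : 0 ≤ qs) (h3 : qs < p)
    (hm : (m : ℚ) < (q : ℚ) / p)
    (S : ℤ → ℤ) (hS0 : ∀ k : ℤ, 0 < k → 0 ≤ S k)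
    (hS : ∀ k : ℤ, 0 < k → ⌊(k : ℚ) / ((q : ℚ) - m * p)⌋ ≤ S k) :
    ∀ k : ℤ, 0 < k →
      (1 / (k : ℚ)) *
          ((1 + ⌊((qs : ℚ) / p) * k⌋ + ⌊(k : ℚ) / ((q : ℚ) - m * p)⌋ : ℤ) : ℚ)
        > ((ps : ℚ) - m * qs) / ((q : ℚ) - m * p) :=
  stmt17_general p q ps qs m hp h1 hm
end
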